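/- Let h_1,…,h_r ∈ ℝ^n and S = {x ∈ ℝ^n : h_i^T x ≤ 1, i = 1,…,r}. Let A ∈ ℝ^{n×n}, γ ≥ 0, λ ≥ 0, and let Q ∈ ℝ^{n×n} be a symmetric positive definite matrix such that the 2n×2n block matrix [[Q − A Q A^T, −A Q], [−Q A^T, −Q]] − λ·[[γ² I, 0], [0, −I]] is positive semidefinite, h_i^T Q h_i ≤ 1 for every i = 1,…,r, and x ∈ ℝ^n satisfies x^T Q^{-1} x ≤ 1. Then for every function g : ℝ^n → ℝ^n satisfying ‖g(z)‖ ≤ γ‖z‖ for all z ∈ S (with ‖·‖ the Euclidean norm), the trajectory defined by x_0 = x and x_{t+1} = A x_t + g(x_t) satisfies x_t ∈ S for every integer t ≥ 0. -/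

import Mathlib

/-!
Write `E = {z | zᵀ Q⁻¹ z ≤ 1}`. By the Cauchy–Schwarz inequality for the inner product given by
`Q`, `(hᵀ z)² ≤ (hᵀ Q h)(zᵀ Q⁻¹ z)`, so `hᵢᵀ Q hᵢ ≤ 1` puts `E` inside `S`. For invariance, let
`z ∈ E`, `‖w‖ ≤ γ‖z‖`, `y = A z + w` and `v = Q⁻¹ y`. Pick `q` with `qᵀ z = vᵀ w` and
`‖q‖ ≤ γ‖v‖`; then `yᵀ Q⁻¹ y = (Aᵀ v + q)ᵀ z`, while the block LMI tested on `(v, q)` gives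
`(Aᵀ v + q)ᵀ Q (Aᵀ v + q) ≤ vᵀ Q v = yᵀ Q⁻¹ y`. Cauchy–Schwarz again gives
`(yᵀ Q⁻¹ y)² ≤ yᵀ Q⁻¹ y`, i.e. `y ∈ E`. Induction keeps the trajectory in `E ⊆ S`.
-/

open Matrix

namespace Matrix

variable {m : Type*} [Fintype m]

theorem dotProduct_self_nonneg (v : m → ℝ) : 0 ≤ v ⬝ᵥ v := by
  simpa using dotProduct_self_star_nonneg v

theorem PosSemidef.dotProduct_mulVec_self_nonneg {M : Matrix m m ℝ} (hM : M.PosSemidef)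
    (x : m → ℝ) : 0 ≤ x ⬝ᵥ (M *ᵥ x) := by
  simpa using hM.dotProduct_mulVec_nonneg x

theorem PosSemidef.dotProduct_mulVec_sq_le {M : Matrix m m ℝ} (hM : M.PosSemidef)
    (a b : m → ℝ) : (a ⬝ᵥ (M *ᵥ b)) ^ 2 ≤ (a ⬝ᵥ (M *ᵥ a)) * (b ⬝ᵥ (M *ᵥ b)) := by
  let := M.toSeminormedAddCommGroup hM
  let := M.toInnerProductSpace hM
  have := real_inner_mul_inner_self_le a b
  change (M *ᵥ b) ⬝ᵥ star a * ((M *ᵥ b) ⬝ᵥ star a)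
    ≤ (M *ᵥ a) ⬝ᵥ star a * ((M *ᵥ b) ⬝ᵥ star b) at this
  simpa [sq, dotProduct_comm] using this

theorem dotProduct_sq_le (v w : m → ℝ) : (v ⬝ᵥ w) ^ 2 ≤ (v ⬝ᵥ v) * (w ⬝ᵥ w) := by
  classical
  simpa using PosSemidef.one.dotProduct_mulVec_sq_le v w

theorem dotProduct_self_le_of_sqrt_sum_sq_le {u z : m → ℝ} {γ : ℝ}
    (h : √(∑ i, u i ^ 2) ≤ γ * √(∑ i, z i ^ 2)) : u ⬝ᵥ u ≤ γ ^ 2 * (z ⬝ᵥ z) := by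
  have hsum : ∀ v : m → ℝ, ∑ i, v i ^ 2 = v ⬝ᵥ v := fun v => by simp [dotProduct, sq]
  have := pow_le_pow_left₀ (Real.sqrt_nonneg _) h 2
  rwa [hsum, hsum, mul_pow, Real.sq_sqrt (dotProduct_self_nonneg u),
    Real.sq_sqrt (dotProduct_self_nonneg z)] at this

theorem exists_dotProduct_eq_of_dotProduct_self_le {z w : m → ℝ} {γ : ℝ}
    (hw : w ⬝ᵥ w ≤ γ ^ 2 * (z ⬝ᵥ z)) (v : m → ℝ) :
    ∃ q, q ⬝ᵥ z = v ⬝ᵥ w ∧ q ⬝ᵥ q ≤ γ ^ 2 * (v ⬝ᵥ v) := by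
  -- for `z = 0` the coefficient is `_ / 0 = 0`, which is right since then `w = 0`
  refine ⟨((v ⬝ᵥ w) / (z ⬝ᵥ z)) • z, ?_, ?_⟩
  · rcases eq_or_ne z 0 with rfl | hz
    · have hw0 : w = 0 :=
        dotProduct_self_eq_zero.1 (le_antisymm (by simpa using hw) (dotProduct_self_nonneg w))
      simp [hw0]
    · rw [smul_dotProduct, smul_eq_mul, div_mul_cancel₀ _ (dotProduct_self_eq_zero.not.2 hz)]
  · rcases (dotProduct_self_nonneg z).eq_or_lt with hz | hz
    · simpa [← hz] using mul_nonneg (sq_nonneg γ) (dotProduct_self_nonneg v)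
    · calc ((v ⬝ᵥ w) / (z ⬝ᵥ z)) • z ⬝ᵥ ((v ⬝ᵥ w) / (z ⬝ᵥ z)) • z
          = (v ⬝ᵥ w) ^ 2 / (z ⬝ᵥ z) := by
            simp only [smul_dotProduct, dotProduct_smul, smul_eq_mul]
            field_simp
        _ ≤ γ ^ 2 * (v ⬝ᵥ v) := by
            rw [div_le_iff₀ hz]
            nlinarith [dotProduct_sq_le v w, dotProduct_self_nonneg v]

variable [DecidableEq m]

theorem dotProduct_transpose_mulVec_add_le_of_posSemidef_fromBlocks {A Q : Matrix m m ℝ}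
    {γ lam : ℝ}
    (hblock : (fromBlocks (Q - A * Q * Aᵀ) (-(A * Q)) (-(Q * Aᵀ)) (-Q) -
        lam • fromBlocks (γ ^ 2 • (1 : Matrix m m ℝ)) 0 0 (-1)).PosSemidef)
    (p q : m → ℝ) :
    (Aᵀ *ᵥ p + q) ⬝ᵥ (Q *ᵥ (Aᵀ *ᵥ p + q)) + lam * γ ^ 2 * (p ⬝ᵥ p)
      ≤ p ⬝ᵥ (Q *ᵥ p) + lam * (q ⬝ᵥ q) := by
  have h0 := hblock.dotProduct_mulVec_self_nonneg (Sum.elim p q)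
  simp only [sub_mulVec, smul_mulVec, fromBlocks_mulVec, dotProduct_sub, dotProduct_smul,
    sumElim_dotProduct_sumElim, Sum.elim_comp_inl, Sum.elim_comp_inr] at h0
  simp only [zero_mulVec, add_zero, zero_add, neg_mulVec, one_mulVec, ← mulVec_mulVec,
    mulVec_add, dotProduct_add, add_dotProduct, dotProduct_sub, dotProduct_neg, dotProduct_smul,
    smul_eq_mul, dotProduct_mulVec p A, ← mulVec_transpose] at h0 ⊢
  linarith

def ellipsoid (Q : Matrix m m ℝ) : Set (m → ℝ) := {z | z ⬝ᵥ (Q⁻¹ *ᵥ z) ≤ 1}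

namespace PosDef

variable {Q : Matrix m m ℝ}

theorem mulVec_inv_mulVec (hQ : Q.PosDef) (z : m → ℝ) : Q *ᵥ (Q⁻¹ *ᵥ z) = z := by
  rw [mulVec_mulVec, mul_nonsing_inv _ ((isUnit_iff_isUnit_det Q).1 hQ.isUnit), one_mulVec]

theorem dotProduct_sq_le (hQ : Q.PosDef) (a z : m → ℝ) :
    (a ⬝ᵥ z) ^ 2 ≤ (a ⬝ᵥ (Q *ᵥ a)) * (z ⬝ᵥ (Q⁻¹ *ᵥ z)) := by
  simpa [hQ.mulVec_inv_mulVec, dotProduct_comm z] using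
    hQ.posSemidef.dotProduct_mulVec_sq_le a (Q⁻¹ *ᵥ z)

theorem dotProduct_le_one_of_mem_ellipsoid (hQ : Q.PosDef) {a z : m → ℝ}
    (ha : a ⬝ᵥ (Q *ᵥ a) ≤ 1) (hz : z ∈ ellipsoid Q) : a ⬝ᵥ z ≤ 1 := by
  have := hQ.dotProduct_sq_le a z
  nlinarith [hQ.posSemidef.dotProduct_mulVec_self_nonneg a,
    hQ.inv.posSemidef.dotProduct_mulVec_self_nonneg z, show z ⬝ᵥ (Q⁻¹ *ᵥ z) ≤ 1 from hz]

theorem mulVec_add_mem_ellipsoid {A : Matrix m m ℝ} {γ lam : ℝ} (hQ : Q.PosDef) (hlam : 0 ≤ lam)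
    (hblock : (fromBlocks (Q - A * Q * Aᵀ) (-(A * Q)) (-(Q * Aᵀ)) (-Q) -
        lam • fromBlocks (γ ^ 2 • (1 : Matrix m m ℝ)) 0 0 (-1)).PosSemidef)
    {z w : m → ℝ} (hz : z ∈ ellipsoid Q) (hw : w ⬝ᵥ w ≤ γ ^ 2 * (z ⬝ᵥ z)) :
    A *ᵥ z + w ∈ ellipsoid Q := by
  set y := A *ᵥ z + w
  set v := Q⁻¹ *ᵥ y
  obtain ⟨q, hqz, hqq⟩ := exists_dotProduct_eq_of_dotProduct_self_le hw v
  have hyv : y ⬝ᵥ v = (Aᵀ *ᵥ v + q) ⬝ᵥ z := by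
    rw [dotProduct_comm, dotProduct_add, add_dotProduct, hqz, dotProduct_mulVec, mulVec_transpose]
  have hK : (Aᵀ *ᵥ v + q) ⬝ᵥ (Q *ᵥ (Aᵀ *ᵥ v + q)) ≤ y ⬝ᵥ v := by
    have := dotProduct_transpose_mulVec_add_le_of_posSemidef_fromBlocks hblock v q
    rw [hQ.mulVec_inv_mulVec, dotProduct_comm v y] at this
    linarith [mul_le_mul_of_nonneg_left hqq hlam]
  have hsq : (y ⬝ᵥ v) ^ 2 ≤ y ⬝ᵥ v :=
    calc (y ⬝ᵥ v) ^ 2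
        ≤ (Aᵀ *ᵥ v + q) ⬝ᵥ (Q *ᵥ (Aᵀ *ᵥ v + q)) * (z ⬝ᵥ (Q⁻¹ *ᵥ z)) :=
          hyv ▸ hQ.dotProduct_sq_le _ z
      _ ≤ (Aᵀ *ᵥ v + q) ⬝ᵥ (Q *ᵥ (Aᵀ *ᵥ v + q)) :=
          mul_le_of_le_one_right (hQ.posSemidef.dotProduct_mulVec_self_nonneg _) hz
      _ ≤ y ⬝ᵥ v := hK
  show y ⬝ᵥ v ≤ 1
  nlinarith

end PosDef

end Matrix

theorem stmt_16_general (n r : ℕ) (h : Fin r → Fin n → ℝ)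
    (A : Matrix (Fin n) (Fin n) ℝ) (γ lam : ℝ) (hlam : 0 ≤ lam)
    (Q : Matrix (Fin n) (Fin n) ℝ) (hQ : Q.PosDef)
    (hblock : (Matrix.fromBlocks (Q - A * Q * Aᵀ) (-(A * Q)) (-(Q * Aᵀ)) (-Q) -
        lam • Matrix.fromBlocks (γ ^ 2 • (1 : Matrix (Fin n) (Fin n) ℝ)) 0 0
          (-(1 : Matrix (Fin n) (Fin n) ℝ))).PosSemidef)
    (hpolar : ∀ i, h i ⬝ᵥ (Q *ᵥ h i) ≤ 1)
    (x : Fin n → ℝ) (hx : x ⬝ᵥ (Q⁻¹ *ᵥ x) ≤ 1)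
    (g : (Fin n → ℝ) → (Fin n → ℝ))
    (hg : ∀ z, (∀ i, h i ⬝ᵥ z ≤ 1) →
      Real.sqrt (∑ i, g z i ^ 2) ≤ γ * Real.sqrt (∑ i, z i ^ 2))
    (traj : ℕ → Fin n → ℝ) (htraj0 : traj 0 = x)
    (htraj : ∀ t, traj (t + 1) = A *ᵥ traj t + g (traj t)) :
    ∀ t, ∀ i, h i ⬝ᵥ traj t ≤ 1 := by
  have hsafe : ∀ z ∈ ellipsoid Q, ∀ i, h i ⬝ᵥ z ≤ 1 := fun z hz i =>
    hQ.dotProduct_le_one_of_mem_ellipsoid (hpolar i) hz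
  have hinv : ∀ t, traj t ∈ ellipsoid Q := by
    intro t
    induction t with
    | zero => rwa [htraj0]
    | succ t ih =>
      rw [htraj]
      exact hQ.mulVec_add_mem_ellipsoid hlam hblock ih
        (dotProduct_self_le_of_sqrt_sum_sq_le (hg _ (hsafe _ ih)))
  exact fun t => hsafe _ (hinv t)

/-- Block-LMI certificate of infinite-step safety for nonlinear dynamics
`x ↦ A x + g(x)` with `‖g(z)‖ ≤ γ‖z‖` on `S`: every trajectory started inside the
ellipsoid `{z : zᵀ Q⁻¹ z ≤ 1}` remains in the polyhedral safety region
`S = {z : hᵢᵀ z ≤ 1}` for all time. -/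
theorem stmt_16 (n r : ℕ) (h : Fin r → Fin n → ℝ)
    (A : Matrix (Fin n) (Fin n) ℝ) (γ lam : ℝ) (hγ : 0 ≤ γ) (hlam : 0 ≤ lam)
    (Q : Matrix (Fin n) (Fin n) ℝ) (hQ : Q.PosDef)
    (hblock : (Matrix.fromBlocks (Q - A * Q * Aᵀ) (-(A * Q)) (-(Q * Aᵀ)) (-Q) -
        lam • Matrix.fromBlocks (γ ^ 2 • (1 : Matrix (Fin n) (Fin n) ℝ)) 0 0
          (-(1 : Matrix (Fin n) (Fin n) ℝ))).PosSemidef)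
    (hpolar : ∀ i, h i ⬝ᵥ (Q *ᵥ h i) ≤ 1)
    (x : Fin n → ℝ) (hx : x ⬝ᵥ (Q⁻¹ *ᵥ x) ≤ 1)
    (g : (Fin n → ℝ) → (Fin n → ℝ))
    (hg : ∀ z, (∀ i, h i ⬝ᵥ z ≤ 1) →
      Real.sqrt (∑ i, g z i ^ 2) ≤ γ * Real.sqrt (∑ i, z i ^ 2))
    (traj : ℕ → Fin n → ℝ) (htraj0 : traj 0 = x)
    (htraj : ∀ t, traj (t + 1) = A *ᵥ traj t + g (traj t)) :
    ∀ t, ∀ i, h i ⬝ᵥ traj t ≤ 1 :=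
  stmt_16_general n r h A γ lam hlam Q hQ hblock hpolar x hx g hg traj htraj0 htraj
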